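/- arXiv:2006.04914 — 5 statements merged into one kernel-verified Lean document; each statement's English description precedes it below -/
import Mathlib

section
/- Let A = (a_{ij}) be an n×n complex matrix and let Φ be an orthogonal basis of ℂ^n consisting of eigenvectors of A; for φ ∈ Φ write λ_φ for the eigenvalue of φ (so Aφ = λ_φ · φ). Then ∑_{φ ∈ Φ} ∑_{χ ∈ Ĝ} λ_φ · |P_χ(φ)|² / ⟨φ, φ⟩ = |G| · ∑_{i} (w i) · (h i) · a_{ii}. (This is the paper's Proposition (prop:per-avg), the exact double average of squared periods weighted by Hecke eigenvalues, in the linear-algebra form in which it is proved, with A the Brandt matrix and the right-hand side equal to h_K·⟨c_K, a(m)⟩.) -/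
/-!
Expanding `|P_χ(φ)|²` as a double sum over `G` and using the orthogonality of characters gives
`∑_χ |P_χ(φ)|² = |G| ∑_t |φ(x t)|²`. It then remains to see that
`∑_φ λ_φ |φ i|² / ⟨φ, φ⟩ = w i · a_ii`: expand the basis vector `e_i` in the orthogonal basis `Φ`
(its coefficient on `φ` is `(w i)⁻¹ conj (φ i) / ⟨φ, φ⟩`), apply `A` and read off the `i`-th
coordinate.
-/

open Finset ComplexConjugate Matrix

section Expansion

variable {K M : Type*} [Field K] [AddCommGroup M] [Module K M] {σ : K →+* K}

theorem sum_div_smul_eq_of_pairwise_ortho_of_span_eq_top (B : M →ₗ[K] M →ₛₗ[σ] K)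
    {Φ : Finset M} (hΦ : ∀ φ ∈ Φ, B φ φ ≠ 0) (horth : ∀ φ ∈ Φ, ∀ ψ ∈ Φ, φ ≠ ψ → B φ ψ = 0)
    (hspan : Submodule.span K (Φ : Set M) = ⊤) (v : M) :
    ∑ φ ∈ Φ, (B v φ / B φ φ) • φ = v := by
  let P : M →ₗ[K] M := ∑ φ ∈ Φ, (B φ φ)⁻¹ • (B.flip φ).smulRight φ
  have hP (u : M) : P u = ∑ φ ∈ Φ, (B u φ / B φ φ) • φ := by
    simp [P, div_eq_inv_mul, mul_smul]
  have hP_id : P = LinearMap.id := by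
    refine LinearMap.ext_on hspan fun ψ hψ => ?_
    rw [hP, sum_eq_single_of_mem ψ hψ, div_self (hΦ ψ hψ), one_smul, LinearMap.id_apply]
    intro φ hφ hne
    rw [horth ψ hψ φ hφ hne.symm, zero_div, zero_smul]
  rw [← hP, hP_id, LinearMap.id_apply]

end Expansion

section WeightedInner

variable {ι : Type*} [Fintype ι]

noncomputable def weightedInner (w : ι → ℝ) : (ι → ℂ) →ₗ[ℂ] (ι → ℂ) →ₗ⋆[ℂ] ℂ :=
  LinearMap.mk₂'ₛₗ (RingHom.id ℂ) (starRingEnd ℂ) (fun u v => ∑ i, (w i : ℂ)⁻¹ * u i * conj (v i))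
    (fun _ _ _ => by simp only [Pi.add_apply, mul_add, add_mul, sum_add_distrib])
    (fun _ _ _ => by
      simp only [Pi.smul_apply, smul_eq_mul, mul_sum]
      exact sum_congr rfl fun _ _ => by simp only [RingHom.id_apply]; ring)
    (fun _ _ _ => by simp only [Pi.add_apply, map_add, mul_add, sum_add_distrib])
    (fun _ _ _ => by
      simp only [Pi.smul_apply, smul_eq_mul, map_mul, mul_sum]
      exact sum_congr rfl fun _ _ => by ring)

theorem weightedInner_apply (w : ι → ℝ) (u v : ι → ℂ) :
    weightedInner w u v = ∑ i, (w i : ℂ)⁻¹ * u i * conj (v i) :=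
  rfl

theorem weightedInner_self_ne_zero {w : ι → ℝ} (hw : ∀ i, 0 < w i) {φ : ι → ℂ} (hφ : φ ≠ 0) :
    weightedInner w φ φ ≠ 0 := by
  have hre : weightedInner w φ φ = ((∑ i, (w i)⁻¹ * ‖φ i‖ ^ 2 : ℝ) : ℂ) := by
    push_cast
    simp only [weightedInner_apply, mul_assoc, Complex.mul_conj']
  obtain ⟨i, hi⟩ := Function.ne_iff.mp hφ
  rw [hre, Ne, Complex.ofReal_eq_zero]
  refine (sum_pos' (fun j _ => by have := hw j; positivity) ⟨i, mem_univ i, ?_⟩).ne'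
  have := hw i
  have := norm_pos_iff.mpr hi
  positivity

theorem weightedInner_single_one_left [DecidableEq ι] (w : ι → ℝ) (i : ι) (φ : ι → ℂ) :
    weightedInner w (Pi.single i 1) φ = (w i : ℂ)⁻¹ * conj (φ i) := by
  rw [weightedInner_apply, sum_eq_single i (fun j _ hj => by simp [hj]) (by simp)]
  simp

theorem sum_eigenvalue_mul_sq_norm_div_weightedInner_self {w : ι → ℝ} (hw : ∀ i, 0 < w i)
    (A : Matrix ι ι ℂ) {Φ : Finset (ι → ℂ)} (lam : (ι → ℂ) → ℂ) (hΦ0 : ∀ φ ∈ Φ, φ ≠ 0)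
    (hΦorth : ∀ φ ∈ Φ, ∀ ψ ∈ Φ, φ ≠ ψ → weightedInner w φ ψ = 0)
    (hΦspan : Submodule.span ℂ (Φ : Set (ι → ℂ)) = ⊤)
    (hEig : ∀ φ ∈ Φ, A *ᵥ φ = lam φ • φ) (i : ι) :
    ∑ φ ∈ Φ, lam φ * (‖φ i‖ : ℂ) ^ 2 / weightedInner w φ φ = w i * A i i := by
  classical
  have hwi : (w i : ℂ) ≠ 0 := by exact_mod_cast (hw i).ne'
  have hexp := sum_div_smul_eq_of_pairwise_ortho_of_span_eq_top (weightedInner w)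
    (fun φ hφ => weightedInner_self_ne_zero hw (hΦ0 φ hφ)) hΦorth hΦspan (Pi.single i 1)
  calc ∑ φ ∈ Φ, lam φ * (‖φ i‖ : ℂ) ^ 2 / weightedInner w φ φ
      = w i * ∑ φ ∈ Φ, (weightedInner w (Pi.single i 1) φ / weightedInner w φ φ) *
          (A *ᵥ φ) i := by
        rw [mul_sum]
        refine sum_congr rfl fun φ hφ => ?_
        rw [hEig φ hφ, weightedInner_single_one_left, ← Complex.mul_conj', Pi.smul_apply,
          smul_eq_mul]
        field_simp
    _ = w i * (A *ᵥ ∑ φ ∈ Φ, (weightedInner w (Pi.single i 1) φ / weightedInner w φ φ) • φ) i := by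
        simp only [mulVec_sum, mulVec_smul, Finset.sum_apply, Pi.smul_apply, smul_eq_mul]
    _ = w i * A i i := by
        rw [hexp, mulVec_single_one]
        rfl

end WeightedInner

section Characters

variable {G : Type*} [CommGroup G] [Fintype G]

theorem sum_monoidHom_apply_eq_zero (R : Type*) [CommRing R] [IsDomain R]
    [HasEnoughRootsOfUnity R (Monoid.exponent G)] [Fintype (G →* Rˣ)] {a : G} (ha : a ≠ 1) :
    ∑ χ : G →* Rˣ, (χ a : R) = 0 := by
  obtain ⟨χ, hχ⟩ := CommGroup.exists_apply_ne_one_of_hasEnoughRootsOfUnity G R ha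
  refine eq_zero_of_mul_eq_self_left (Units.val_eq_one.not.mpr hχ) ?_
  simp only [Finset.mul_sum, ← Units.val_mul, ← MonoidHom.mul_apply]
  exact Fintype.sum_bijective _ (Group.mulLeft_bijective χ) _ _ fun _ ↦ rfl

theorem sum_monoidHom_apply [DecidableEq G] (R : Type*) [CommRing R] [IsDomain R]
    [HasEnoughRootsOfUnity R (Monoid.exponent G)] [Fintype (G →* Rˣ)] (a : G) :
    ∑ χ : G →* Rˣ, (χ a : R) = if a = 1 then (Fintype.card G : R) else 0 := by
  split_ifs with ha
  · simpa [ha, ← Nat.card_eq_fintype_card]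
      using congrArg (Nat.cast (R := R)) (CommGroup.card_monoidHom_of_hasEnoughRootsOfUnity G R)
  · exact sum_monoidHom_apply_eq_zero R ha

theorem sum_monoidHom_inv_apply_mul_apply [DecidableEq G] (R : Type*) [CommRing R] [IsDomain R]
    [HasEnoughRootsOfUnity R (Monoid.exponent G)] [Fintype (G →* Rˣ)] (s t : G) :
    ∑ χ : G →* Rˣ, (((χ s)⁻¹ * χ t : Rˣ) : R) = if s = t then (Fintype.card G : R) else 0 := by
  simp only [← map_inv, ← map_mul, sum_monoidHom_apply, inv_mul_eq_one]

theorem conj_monoidHom_apply (χ : G →* ℂˣ) (t : G) : conj (χ t : ℂ) = (χ t : ℂ)⁻¹ := by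
  have hpow : (χ t : ℂ) ^ Fintype.card G = 1 := by
    rw [← Units.val_pow_eq_pow_val, ← map_pow, pow_card_eq_one, map_one, Units.val_one]
  exact (Complex.inv_eq_conj (Complex.norm_eq_one_of_pow_eq_one hpow Fintype.card_ne_zero)).symm

theorem sum_sq_norm_sum_mul_inv_monoidHom_apply [Fintype (G →* ℂˣ)] (f : G → ℂ) :
    ∑ χ : G →* ℂˣ, ‖∑ t, f t * (χ t : ℂ)⁻¹‖ ^ 2 = Fintype.card G * ∑ t, ‖f t‖ ^ 2 := by
  classical
  have horth (s t : G) :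
      ∑ χ : G →* ℂˣ, (χ s : ℂ)⁻¹ * χ t = if s = t then (Fintype.card G : ℂ) else 0 := by
    simpa using sum_monoidHom_inv_apply_mul_apply ℂ s t
  apply Complex.ofReal_injective
  push_cast
  calc ∑ χ : G →* ℂˣ, (‖∑ t, f t * (χ t : ℂ)⁻¹‖ : ℂ) ^ 2
      = ∑ χ : G →* ℂˣ, ∑ s, ∑ t, f s * conj (f t) * ((χ s : ℂ)⁻¹ * χ t) := by
        simp_rw [← Complex.mul_conj', map_sum, sum_mul_sum, map_mul, map_inv₀,
          conj_monoidHom_apply, inv_inv]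
        exact sum_congr rfl fun _ _ => sum_congr rfl fun _ _ => sum_congr rfl fun _ _ => by ring
    _ = ∑ s, ∑ t, f s * conj (f t) * ∑ χ : G →* ℂˣ, (χ s : ℂ)⁻¹ * χ t := by
        simp only [mul_sum]
        rw [sum_comm]
        exact sum_congr rfl fun _ _ => sum_comm
    _ = Fintype.card G * ∑ t, (‖f t‖ : ℂ) ^ 2 := by
        simp only [horth, mul_ite, mul_zero, sum_ite_eq, mem_univ, ite_true, mul_sum,
          Complex.mul_conj']
        exact sum_congr rfl fun _ _ => mul_comm _ _

end Characters

theorem exact_double_average_of_squared_periods_general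
    (n : ℕ) (w : Fin n → ℝ) (hw : ∀ i, 0 < w i)
    (G : Type*) [CommGroup G] [Fintype G] [Fintype (G →* ℂˣ)]
    (x : G → Fin n)
    (A : Matrix (Fin n) (Fin n) ℂ)
    (Φ : Finset (Fin n → ℂ)) (lam : (Fin n → ℂ) → ℂ)
    (hΦ0 : ∀ φ ∈ Φ, φ ≠ 0)
    (hΦorth : ∀ φ ∈ Φ, ∀ ψ ∈ Φ, φ ≠ ψ →
      ∑ i, ((w i : ℂ))⁻¹ * φ i * (starRingEnd ℂ) (ψ i) = 0)
    (hΦspan : Submodule.span ℂ (Φ : Set (Fin n → ℂ)) = ⊤)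
    (hEig : ∀ φ ∈ Φ, A.mulVec φ = lam φ • φ) :
    ∑ φ ∈ Φ, ∑ χ : G →* ℂˣ,
        lam φ * ((‖∑ t : G, φ (x t) * ((χ t : ℂ))⁻¹‖ : ℂ)) ^ 2 /
          (∑ i, ((w i : ℂ))⁻¹ * φ i * (starRingEnd ℂ) (φ i))
      = (Fintype.card G : ℂ) * ∑ i, (w i : ℂ) *
          ((Finset.univ.filter (fun t : G => x t = i)).card : ℂ) * A i i := by
  classical
  simp only [← weightedInner_apply] at hΦorth ⊢
  have hperiods (φ : Fin n → ℂ) : ∑ χ : G →* ℂˣ, (‖∑ t, φ (x t) * (χ t : ℂ)⁻¹‖ : ℂ) ^ 2 =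
      Fintype.card G * ∑ t, (‖φ (x t)‖ : ℂ) ^ 2 := by
    exact_mod_cast congrArg ((↑) : ℝ → ℂ) (sum_sq_norm_sum_mul_inv_monoidHom_apply fun t => φ (x t))
  calc _ = ∑ φ ∈ Φ, lam φ / weightedInner w φ φ *
          ∑ χ : G →* ℂˣ, (‖∑ t, φ (x t) * (χ t : ℂ)⁻¹‖ : ℂ) ^ 2 := by
        simp only [mul_sum]
        exact sum_congr rfl fun _ _ => sum_congr rfl fun _ _ => by ring
    _ = Fintype.card G * ∑ t, ∑ φ ∈ Φ, lam φ * (‖φ (x t)‖ : ℂ) ^ 2 / weightedInner w φ φ := by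
        simp only [hperiods, mul_sum]
        rw [sum_comm]
        exact sum_congr rfl fun _ _ => sum_congr rfl fun _ _ => by ring
    _ = Fintype.card G * ∑ t, (w (x t) : ℂ) * A (x t) (x t) := by
        simp only [sum_eigenvalue_mul_sq_norm_div_weightedInner_self hw A lam hΦ0 hΦorth hΦspan
          hEig]
    _ = _ := by
        rw [← sum_fiberwise' univ x fun i => (w i : ℂ) * A i i]
        simp only [sum_const, nsmul_eq_mul]
        exact congrArg _ (sum_congr rfl fun _ _ => by ring)

/-- Let `A` be an `n × n` complex matrix and `Φ` an orthogonal basis of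
`ℂ^n` (with the weighted inner product `⟨φ, ψ⟩ = ∑ i, (w i)⁻¹ φ i conj (ψ i)`) consisting
of eigenvectors of `A`, with eigenvalues `lam φ`.  Then
`∑_{φ ∈ Φ} ∑_{χ ∈ Ĝ} lam φ * |P_χ(φ)|² / ⟨φ, φ⟩ = |G| ∑_i (w i)(h i) a_{ii}`. -/
theorem exact_double_average_of_squared_periods
    (n : ℕ) (hn : 1 ≤ n) (w : Fin n → ℝ) (hw : ∀ i, 0 < w i)
    (G : Type*) [CommGroup G] [Fintype G] [Fintype (G →* ℂˣ)]
    (x : G → Fin n)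
    (A : Matrix (Fin n) (Fin n) ℂ)
    (Φ : Finset (Fin n → ℂ)) (lam : (Fin n → ℂ) → ℂ)
    (hΦ0 : ∀ φ ∈ Φ, φ ≠ 0)
    (hΦorth : ∀ φ ∈ Φ, ∀ ψ ∈ Φ, φ ≠ ψ →
      ∑ i, ((w i : ℂ))⁻¹ * φ i * (starRingEnd ℂ) (ψ i) = 0)
    (hΦspan : Submodule.span ℂ (Φ : Set (Fin n → ℂ)) = ⊤)
    (hEig : ∀ φ ∈ Φ, A.mulVec φ = lam φ • φ) :
    ∑ φ ∈ Φ, ∑ χ : G →* ℂˣ,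
        lam φ * ((‖∑ t : G, φ (x t) * ((χ t : ℂ))⁻¹‖ : ℂ)) ^ 2 /
          (∑ i, ((w i : ℂ))⁻¹ * φ i * (starRingEnd ℂ) (φ i))
      = (Fintype.card G : ℂ) * ∑ i, (w i : ℂ) *
          ((Finset.univ.filter (fun t : G => x t = i)).card : ℂ) * A i i :=
  exact_double_average_of_squared_periods_general n w hw G x A Φ lam hΦ0 hΦorth hΦspan hEig
end

section
/- For each character χ of G and each i ∈ Fin n set c_χ(i) = ∑_{t ∈ G, x t = i} χ(t). Then the equality ∑_i (w i) · |c_χ(i)|² = ∑_i (w i) · (h i)² holds for every character χ of G if and only if h i ≤ 1 for all i ∈ Fin n. (This is the equality criterion of the paper's Lemma (lem:stab1), characterizing the semistable range by the condition that the class map is injective on each fiber.) -/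
/-!
Every value of a character of a finite group is a root of unity, so each fiber sum
`c_χ(i)` has norm at most `h i`, and the weighted identity holds exactly when every fiber sum
attains this bound. A fiber with two distinct points `t₁ ≠ t₂` contains, for a character with
`χ t₁ ≠ χ t₂` (characters of a finite abelian group separate points), two different unit vectors,
and strict convexity of `ℂ` makes its sum strictly shorter than its cardinality.
-/

open Finset

lemma MonoidHom.norm_units_apply_eq_one {G : Type*} [Group G] [Finite G] (χ : G →* ℂˣ) (t : G) :
    ‖(χ t : ℂ)‖ = 1 := by
  refine Complex.norm_eq_one_of_pow_eq_one (n := Nat.card G) ?_ Nat.card_pos.ne'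
  rw [← Units.val_pow_eq_pow_val, ← map_pow, pow_card_eq_one', map_one, Units.val_one]

section UnitVectors

variable {ι V : Type*} [NormedAddCommGroup V] {s : Finset ι} {z : ι → V}

lemma norm_sum_le_card_of_norm_eq_one (hz : ∀ t ∈ s, ‖z t‖ = 1) : ‖∑ t ∈ s, z t‖ ≤ #s := by
  simpa using norm_sum_le_of_le s fun t ht => (hz t ht).le

lemma norm_sum_lt_card_of_norm_eq_one [NormedSpace ℝ V] [StrictConvexSpace ℝ V]
    (hz : ∀ t ∈ s, ‖z t‖ = 1) {i j : ι} (hi : i ∈ s) (hj : j ∈ s) (hij : z i ≠ z j) : ‖∑ t ∈ s, z t‖ < #s := by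
  have hs : (0 : ℝ) < #s := by exact_mod_cast card_pos.mpr ⟨i, hi⟩
  have hmean := norm_sum_lt_of_strictConvexSpace (w := fun _ => (#s : ℝ)⁻¹) (r := 1)
    (fun _ _ => by positivity) (by simp [hs.ne']) hi hj hij (by positivity) (by positivity)
    fun t ht => (hz t ht).le
  rwa [← smul_sum, norm_smul, Real.norm_of_nonneg (by positivity), inv_mul_lt_iff₀ hs,
    mul_one] at hmean

end UnitVectors

lemma forall_norm_sum_units_apply_eq_card_iff {G : Type*} [CommGroup G] [Finite G]
    (s : Finset G) : (∀ χ : G →* ℂˣ, ‖∑ t ∈ s, (χ t : ℂ)‖ = #s) ↔ #s ≤ 1 := by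
  constructor
  · intro hχ
    by_contra! hs
    obtain ⟨t₁, ht₁, t₂, ht₂, hne⟩ := one_lt_card.mp hs
    have : NeZero (Monoid.exponent G) := ⟨Monoid.exponent_ne_zero_of_finite⟩
    obtain ⟨χ, hχne⟩ : ∃ χ : G →* ℂˣ, χ t₁ ≠ χ t₂ :=
      not_forall.mp ((CommGroup.forall_apply_eq_apply_iff G (M := ℂ)).not.mpr hne)
    exact (norm_sum_lt_card_of_norm_eq_one (fun t _ => χ.norm_units_apply_eq_one t) ht₁ ht₂
      (Units.val_injective.ne hχne)).ne (hχ χ)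
  · intro hs χ
    obtain hs | hs := Nat.le_one_iff_eq_zero_or_eq_one.mp hs
    · simp [card_eq_zero.mp hs]
    · obtain ⟨t, rfl⟩ := card_eq_one.mp hs
      simp [χ.norm_units_apply_eq_one t]

lemma sum_mul_sq_eq_sum_mul_sq_iff {ι : Type*} {s : Finset ι} {w a b : ι → ℝ}
    (hw : ∀ i ∈ s, 0 < w i) (ha : ∀ i ∈ s, 0 ≤ a i) (hab : ∀ i ∈ s, a i ≤ b i) :
    ∑ i ∈ s, w i * a i ^ 2 = ∑ i ∈ s, w i * b i ^ 2 ↔ ∀ i ∈ s, a i = b i := by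
  rw [sum_eq_sum_iff_of_le fun i hi =>
    mul_le_mul_of_nonneg_left (pow_le_pow_left₀ (ha i hi) (hab i hi) 2) (hw i hi).le]
  refine forall₂_congr fun i hi => ?_
  rw [mul_right_inj' (hw i hi).ne',
    pow_left_inj₀ (ha i hi) ((ha i hi).trans (hab i hi)) two_ne_zero]

theorem twisted_height_pairing_eq_iff_semistable_general
    (n : ℕ) (w : Fin n → ℝ) (hw : ∀ i, 0 < w i)
    (G : Type*) [CommGroup G] [Fintype G]
    (x : G → Fin n) :
    (∀ χ : G →* ℂˣ,
      ∑ i, w i *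
          ‖∑ t ∈ Finset.univ.filter (fun t : G => x t = i), ((χ t : ℂ))‖ ^ 2
        = ∑ i, w i * ((Finset.univ.filter (fun t : G => x t = i)).card : ℝ) ^ 2)
    ↔ (∀ i, (Finset.univ.filter (fun t : G => x t = i)).card ≤ 1) := by
  calc _ ↔ ∀ χ : G →* ℂˣ, ∀ i, ‖∑ t ∈ univ.filter (fun t => x t = i), (χ t : ℂ)‖
          = #(univ.filter fun t => x t = i) :=
        forall_congr' fun χ => by
          simpa using sum_mul_sq_eq_sum_mul_sq_iff (s := univ) (fun i _ => hw i)
            (fun _ _ => norm_nonneg _) fun i _ =>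
              norm_sum_le_card_of_norm_eq_one fun t _ => χ.norm_units_apply_eq_one t
    _ ↔ _ := forall_comm
    _ ↔ _ := forall_congr' fun i => forall_norm_sum_units_apply_eq_card_iff _

/-- For each character `χ` of `G` and each `i`, set
`c_χ(i) = ∑_{t ∈ G, x t = i} χ(t)`.  Then
`∑_i (w i) |c_χ(i)|² = ∑_i (w i) (h i)²` holds for every character `χ` of `G`
if and only if `h i ≤ 1` for all `i`, where `h i = #{t ∈ G : x t = i}`. -/
theorem twisted_height_pairing_eq_iff_semistable
    (n : ℕ) (hn : 1 ≤ n) (w : Fin n → ℝ) (hw : ∀ i, 0 < w i)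
    (G : Type*) [CommGroup G] [Fintype G]
    (x : G → Fin n) :
    (∀ χ : G →* ℂˣ,
      ∑ i, w i *
          ‖∑ t ∈ Finset.univ.filter (fun t : G => x t = i), ((χ t : ℂ))‖ ^ 2
        = ∑ i, w i * ((Finset.univ.filter (fun t : G => x t = i)).card : ℝ) ^ 2)
    ↔ (∀ i, (Finset.univ.filter (fun t : G => x t = i)).card ≤ 1) :=
  twisted_height_pairing_eq_iff_semistable_general n w hw G x
end

section
/- Suppose Φ is an orthogonal basis of ℂ^n such that φ_μ ∈ Φ for every character μ of H and the assignment μ ↦ φ_μ is injective; set Φ₀ = Φ \ {φ_μ : μ ∈ Ĥ}, and for a character χ of G let m⁺(χ) = #{μ ∈ Ĥ : μ ∘ θ = χ}. Let 1 denote the trivial character of G. Then ∑_i (w i)(h i) − m⁺(1) · |G|²/m ≤ ∑_{φ ∈ Φ₀} |P_1(φ)|² / ⟨φ, φ⟩ ≤ |G| · ∑_i (w i)(h i) − m⁺(1) · |G|²/m, and the lower bound is an equality if and only if h i ≤ 1 for all i. (This is the bound of the paper's Corollary (cor:semistable), in the linear-algebra form in which it is proved, with the φ_μ the Eisenstein basis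 vectors and m = m(𝒪) the mass.) -/
/-!
The trivial-character period is a weighted inner product, `P_1(φ) = ⟨φ, ξ⟩` with
`ξ i = w i * h i`, so Parseval over the orthogonal basis `Φ` gives
`∑_{φ ∈ Φ} |P_1(φ)|² / ⟨φ, φ⟩ = ⟨ξ, ξ⟩ = ∑_i w i * (h i)²`. By orthogonality of characters,
the Eisenstein vector `φ_μ` has period `|G|` if `μ ∘ θ = 1` and `0` otherwise, and
`⟨φ_μ, φ_μ⟩ = m`; removing them leaves `∑_i w i * (h i)² - m⁺(1) |G|² / m`. The bounds are then
`h ≤ h² ≤ |G| h` for natural numbers `h ≤ |G|`, with `h = h²` exactly when `h ≤ 1`.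
-/

open Finset
open scoped InnerProductSpace ComplexConjugate

section Parseval

variable {𝕜 E ι : Type*} [RCLike 𝕜] [NormedAddCommGroup E] [InnerProductSpace 𝕜 E]

theorem sum_norm_inner_sq_div_norm_sq_eq_norm_sq {v : ι → E} {s : Finset ι}
    (horth : ∀ i ∈ s, ∀ j ∈ s, i ≠ j → ⟪v i, v j⟫_𝕜 = 0)
    (hspan : Submodule.span 𝕜 (v '' s) = ⊤) (ξ : E) :
    ∑ i ∈ s, ‖⟪v i, ξ⟫_𝕜‖ ^ 2 / ‖v i‖ ^ 2 = ‖ξ‖ ^ 2 := by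
  obtain ⟨c, rfl⟩ := (Submodule.mem_span_image_finset_iff_exists_fun' 𝕜).1
    (hspan ▸ Submodule.mem_top : ξ ∈ Submodule.span 𝕜 (v '' s))
  have hcoeff : ∀ j ∈ s, ⟪v j, ∑ i ∈ s, c i • v i⟫_𝕜 = c j * (‖v j‖ : 𝕜) ^ 2 := by
    intro j hj
    rw [inner_sum, Finset.sum_eq_single_of_mem j hj, inner_smul_right,
      inner_self_eq_norm_sq_to_K]
    intro i hi hij
    rw [inner_smul_right, horth j hj i hi (Ne.symm hij), mul_zero]
  have hpyth : ‖∑ i ∈ s, c i • v i‖ ^ 2 = ∑ i ∈ s, ‖c i‖ ^ 2 * ‖v i‖ ^ 2 := by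
    apply RCLike.ofReal_injective (K := 𝕜)
    rw [RCLike.ofReal_pow, ← inner_self_eq_norm_sq_to_K, sum_inner, RCLike.ofReal_sum]
    refine Finset.sum_congr rfl fun i hi => ?_
    rw [inner_smul_left, hcoeff i hi, ← mul_assoc, RCLike.conj_mul]
    push_cast
    rfl
  rw [hpyth]
  refine Finset.sum_congr rfl fun i hi => ?_
  rw [hcoeff i hi, norm_mul, norm_pow, RCLike.norm_ofReal, abs_norm]
  rcases eq_or_ne ‖v i‖ 0 with h0 | h0
  · simp [h0]
  · field_simp

end Parseval

section WeightedInner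

variable {ι : Type*}

noncomputable def weightedToEuclidean (w : ι → ℝ) : (ι → ℂ) →ₗ[ℂ] EuclideanSpace ℂ ι where
  toFun φ := WithLp.toLp 2 fun i => (√(w i) : ℂ)⁻¹ * φ i
  map_add' φ ψ := by ext i; simp [mul_add]
  map_smul' c φ := by
    ext i
    simp only [PiLp.smul_apply, Pi.smul_apply, smul_eq_mul, RingHom.id_apply]
    ring

theorem inner_weightedToEuclidean [Fintype ι] {w : ι → ℝ} (hw : ∀ i, 0 ≤ w i) (φ ψ : ι → ℂ) :
    ⟪weightedToEuclidean w ψ, weightedToEuclidean w φ⟫_ℂ = ∑ i, (w i : ℂ)⁻¹ * φ i * conj (ψ i) := by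
  simp only [weightedToEuclidean, LinearMap.coe_mk, AddHom.coe_mk, PiLp.inner_apply]
  refine Finset.sum_congr rfl fun i _ => ?_
  have hsq : (√(w i) : ℂ) * √(w i) = w i := by exact_mod_cast Real.mul_self_sqrt (hw i)
  simp only [RCLike.inner_apply, map_mul, map_inv₀, Complex.conj_ofReal, ← hsq]
  ring

theorem norm_sq_weightedToEuclidean [Fintype ι] {w : ι → ℝ} (hw : ∀ i, 0 ≤ w i) (φ : ι → ℂ) :
    ‖weightedToEuclidean w φ‖ ^ 2 = ∑ i, (w i)⁻¹ * ‖φ i‖ ^ 2 := by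
  simp only [weightedToEuclidean, LinearMap.coe_mk, AddHom.coe_mk, EuclideanSpace.norm_sq_eq,
    norm_mul, norm_inv, Complex.norm_real, Real.norm_eq_abs, mul_pow, inv_pow, sq_abs,
    Real.sq_sqrt (hw _)]

theorem weightedToEuclidean_surjective {w : ι → ℝ} (hw : ∀ i, 0 < w i) :
    Function.Surjective (weightedToEuclidean w) := by
  intro y
  refine ⟨fun i => √(w i) * y i, ?_⟩
  ext i
  have : (√(w i) : ℂ) ≠ 0 := by exact_mod_cast (Real.sqrt_pos.2 (hw i)).ne'
  simp [weightedToEuclidean, this]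

theorem weighted_parseval [Fintype ι] {w : ι → ℝ} (hw : ∀ i, 0 < w i) {Φ : Finset (ι → ℂ)}
    (horth : ∀ φ ∈ Φ, ∀ ψ ∈ Φ, φ ≠ ψ → ∑ i, (w i : ℂ)⁻¹ * φ i * conj (ψ i) = 0)
    (hspan : Submodule.span ℂ (Φ : Set (ι → ℂ)) = ⊤) (ξ : ι → ℂ) :
    ∑ φ ∈ Φ, ‖∑ i, (w i : ℂ)⁻¹ * φ i * conj (ξ i)‖ ^ 2 / ∑ i, (w i)⁻¹ * ‖φ i‖ ^ 2
      = ∑ i, (w i)⁻¹ * ‖ξ i‖ ^ 2 := by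
  have hw' : ∀ i, 0 ≤ w i := fun i => (hw i).le
  have hspan' : Submodule.span ℂ (weightedToEuclidean w '' Φ) = ⊤ := by
    rw [Submodule.span_image, hspan, Submodule.map_top, LinearMap.range_eq_top]
    exact weightedToEuclidean_surjective hw
  rw [← norm_sq_weightedToEuclidean hw', ← sum_norm_inner_sq_div_norm_sq_eq_norm_sq
    (fun φ hφ ψ hψ hne => by rw [inner_weightedToEuclidean hw', horth ψ hψ φ hφ hne.symm]) hspan']
  refine Finset.sum_congr rfl fun φ _ => ?_
  rw [← inner_weightedToEuclidean hw', norm_inner_symm, norm_sq_weightedToEuclidean hw']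

end WeightedInner

theorem MonoidHom.norm_units_apply {H : Type*} [Group H] [Fintype H] (μ : H →* ℂˣ) (a : H) :
    ‖(μ a : ℂ)‖ = 1 := by
  refine Complex.norm_eq_one_of_pow_eq_one (n := Fintype.card H) ?_ Fintype.card_ne_zero
  rw [← Units.val_pow_eq_pow_val, ← map_pow, pow_card_eq_one, map_one, Units.val_one]

theorem MonoidHom.sum_units_apply {G : Type*} [Group G] [Fintype G] (χ : G →* ℂˣ)
    [Decidable (χ = 1)] : ∑ t, (χ t : ℂ) = if χ = 1 then (Fintype.card G : ℂ) else 0 := by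
  classical
  have hcomp : (Units.coeHom ℂ).comp χ = 1 ↔ χ = 1 := by
    refine ⟨fun h => MonoidHom.ext fun t => Units.ext (DFunLike.congr_fun h t), ?_⟩
    rintro rfl
    ext
    simp
  simpa only [MonoidHom.coe_comp, Function.comp_apply, Units.coeHom_apply, hcomp, Nat.cast_ite,
    Nat.cast_zero] using sum_hom_units ((Units.coeHom ℂ).comp χ)

theorem sum_comp_eq_sum_card_fiber_mul {α ι : Type*} [Fintype α] [Fintype ι] [DecidableEq ι]
    (x : α → ι) (φ : ι → ℂ) : ∑ t, φ (x t) = ∑ i, (#{t | x t = i} : ℂ) * φ i := by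
  rw [← Finset.sum_fiberwise' univ x φ]
  simp only [Finset.sum_const, nsmul_eq_mul]

theorem sum_mul_le_sum_mul_sq {ι : Type*} (s : Finset ι) {w : ι → ℝ} (hw : ∀ i ∈ s, 0 ≤ w i)
    (k : ι → ℕ) : ∑ i ∈ s, w i * k i ≤ ∑ i ∈ s, w i * (k i : ℝ) ^ 2 :=
  Finset.sum_le_sum fun i hi => mul_le_mul_of_nonneg_left
    (by exact_mod_cast Nat.le_self_pow two_ne_zero (k i)) (hw i hi)

theorem sum_mul_sq_le_mul_sum_mul {ι : Type*} (s : Finset ι) {w : ι → ℝ} (hw : ∀ i ∈ s, 0 ≤ w i)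
    {k : ι → ℕ} {N : ℕ} (hk : ∀ i ∈ s, k i ≤ N) :
    ∑ i ∈ s, w i * (k i : ℝ) ^ 2 ≤ N * ∑ i ∈ s, w i * k i := by
  rw [Finset.mul_sum]
  refine Finset.sum_le_sum fun i hi => ?_
  have : (k i : ℝ) ^ 2 ≤ N * k i := by
    rw [sq]; exact mul_le_mul_of_nonneg_right (by exact_mod_cast hk i hi) (Nat.cast_nonneg _)
  nlinarith [hw i hi]

theorem sum_mul_eq_sum_mul_sq_iff {ι : Type*} (s : Finset ι) {w : ι → ℝ} (hw : ∀ i ∈ s, 0 < w i)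
    (k : ι → ℕ) : ∑ i ∈ s, w i * k i = ∑ i ∈ s, w i * (k i : ℝ) ^ 2 ↔ ∀ i ∈ s, k i ≤ 1 := by
  rw [Finset.sum_eq_sum_iff_of_le fun i hi => mul_le_mul_of_nonneg_left
    (by exact_mod_cast Nat.le_self_pow two_ne_zero (k i)) (hw i hi).le]
  refine forall₂_congr fun i hi => ?_
  have hsq_eq_self : ∀ m : ℕ, m = m ^ 2 ↔ m ≤ 1 := by
    refine fun m => ⟨fun h => ?_, fun h => by interval_cases m <;> rfl⟩
    by_contra! hm
    nlinarith
  rw [mul_right_inj' (hw i hi).ne']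
  exact_mod_cast hsq_eq_self (k i)

theorem sum_norm_sum_comp_sq_div_eq {ι α : Type*} [Fintype ι] [DecidableEq ι] [Fintype α]
    {w : ι → ℝ} (hw : ∀ i, 0 < w i) {Φ : Finset (ι → ℂ)}
    (horth : ∀ φ ∈ Φ, ∀ ψ ∈ Φ, φ ≠ ψ → ∑ i, (w i : ℂ)⁻¹ * φ i * conj (ψ i) = 0)
    (hspan : Submodule.span ℂ (Φ : Set (ι → ℂ)) = ⊤) (x : α → ι) :
    ∑ φ ∈ Φ, ‖∑ t, φ (x t)‖ ^ 2 / ∑ i, (w i)⁻¹ * ‖φ i‖ ^ 2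
      = ∑ i, w i * (#{t | x t = i} : ℝ) ^ 2 := by
  set ξ : ι → ℂ := fun i => ((w i * #{t | x t = i} : ℝ) : ℂ)
  have hperiod : ∀ φ : ι → ℂ, ∑ t, φ (x t) = ∑ i, (w i : ℂ)⁻¹ * φ i * conj (ξ i) := by
    intro φ
    rw [sum_comp_eq_sum_card_fiber_mul]
    refine Finset.sum_congr rfl fun i _ => ?_
    have : (w i : ℂ) ≠ 0 := by exact_mod_cast (hw i).ne'
    simp only [ξ, Complex.conj_ofReal]
    push_cast
    field_simp
  simp only [hperiod]
  rw [weighted_parseval hw horth hspan ξ]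
  refine Finset.sum_congr rfl fun i _ => ?_
  have := (hw i).ne'
  simp only [ξ, Complex.norm_real, Real.norm_eq_abs, sq_abs]
  field_simp

open scoped Classical in
theorem sum_eisenstein_norm_sum_comp_sq_div {ι : Type*} [Fintype ι] (w : ι → ℝ)
    {G H : Type*} [Group G] [Fintype G] [Group H] [Fintype H] [Fintype (H →* ℂˣ)]
    (x : G → ι) (θ : G →* H) (ν : ι → H) (hν : ∀ t, ν (x t) = θ t)
    (hinj : Function.Injective fun (μ : H →* ℂˣ) i => (μ (ν i) : ℂ)) :
    ∑ φ ∈ univ.image (fun (μ : H →* ℂˣ) i => (μ (ν i) : ℂ)),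
        ‖∑ t, φ (x t)‖ ^ 2 / ∑ i, (w i)⁻¹ * ‖φ i‖ ^ 2
      = #{μ : H →* ℂˣ | μ.comp θ = 1} * ((Fintype.card G : ℝ) ^ 2 / ∑ i, (w i)⁻¹) := by
  have hterm : ∀ μ : H →* ℂˣ, ‖∑ t, (μ (ν (x t)) : ℂ)‖ ^ 2 / ∑ i, (w i)⁻¹ * ‖(μ (ν i) : ℂ)‖ ^ 2
      = if μ.comp θ = 1 then (Fintype.card G : ℝ) ^ 2 / ∑ i, (w i)⁻¹ else 0 := by
    intro μ
    simp only [hν, MonoidHom.norm_units_apply, one_pow, mul_one]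
    have hchar := (μ.comp θ).sum_units_apply
    simp only [MonoidHom.comp_apply] at hchar
    rw [hchar]
    split_ifs <;> simp
  rw [Finset.sum_image fun μ _ μ' _ h => hinj h, Finset.sum_congr rfl fun μ _ => hterm μ,
    ← Finset.sum_filter, Finset.sum_const, nsmul_eq_mul]

open scoped Classical in
theorem cuspidal_period_average_bounds_general
    (n : ℕ) (w : Fin n → ℝ) (hw : ∀ i, 0 < w i)
    (G : Type*) [CommGroup G] [Fintype G] [Fintype (G →* ℂˣ)]
    (H : Type*) [CommGroup H] [Fintype H] [Fintype (H →* ℂˣ)]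
    (x : G → Fin n) (θ : G →* H) (ν : Fin n → H)
    (hν : ∀ t : G, ν (x t) = θ t)
    (Φ : Finset (Fin n → ℂ))
    (hΦorth : ∀ φ ∈ Φ, ∀ ψ ∈ Φ, φ ≠ ψ →
      ∑ i, ((w i : ℂ))⁻¹ * φ i * (starRingEnd ℂ) (ψ i) = 0)
    (hΦspan : Submodule.span ℂ (Φ : Set (Fin n → ℂ)) = ⊤)
    (hEis : ∀ μ : H →* ℂˣ, (fun i => ((μ (ν i) : ℂ))) ∈ Φ)
    (hinj : Function.Injective (fun (μ : H →* ℂˣ) => (fun i => ((μ (ν i) : ℂ))))) :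
    (∑ i, w i * ((Finset.univ.filter (fun t : G => x t = i)).card : ℝ)
        - ((Finset.univ.filter (fun μ : H →* ℂˣ => μ.comp θ = (1 : G →* ℂˣ))).card : ℝ)
            * (Fintype.card G : ℝ) ^ 2 / (∑ i, (w i)⁻¹)
      ≤ ∑ φ ∈ Φ.filter (fun φ => ∀ μ : H →* ℂˣ, φ ≠ fun i => ((μ (ν i) : ℂ))),
          ‖∑ t : G, φ (x t) * (((1 : G →* ℂˣ) t : ℂ))⁻¹‖ ^ 2 /
            (∑ i, (w i)⁻¹ * ‖φ i‖ ^ 2)) ∧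
    (∑ φ ∈ Φ.filter (fun φ => ∀ μ : H →* ℂˣ, φ ≠ fun i => ((μ (ν i) : ℂ))),
          ‖∑ t : G, φ (x t) * (((1 : G →* ℂˣ) t : ℂ))⁻¹‖ ^ 2 /
            (∑ i, (w i)⁻¹ * ‖φ i‖ ^ 2)
      ≤ (Fintype.card G : ℝ)
            * ∑ i, w i * ((Finset.univ.filter (fun t : G => x t = i)).card : ℝ)
        - ((Finset.univ.filter (fun μ : H →* ℂˣ => μ.comp θ = (1 : G →* ℂˣ))).card : ℝ)
            * (Fintype.card G : ℝ) ^ 2 / (∑ i, (w i)⁻¹)) ∧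
    ((∑ φ ∈ Φ.filter (fun φ => ∀ μ : H →* ℂˣ, φ ≠ fun i => ((μ (ν i) : ℂ))),
          ‖∑ t : G, φ (x t) * (((1 : G →* ℂˣ) t : ℂ))⁻¹‖ ^ 2 /
            (∑ i, (w i)⁻¹ * ‖φ i‖ ^ 2)
      = ∑ i, w i * ((Finset.univ.filter (fun t : G => x t = i)).card : ℝ)
          - ((Finset.univ.filter (fun μ : H →* ℂˣ => μ.comp θ = (1 : G →* ℂˣ))).card : ℝ)
              * (Fintype.card G : ℝ) ^ 2 / (∑ i, (w i)⁻¹))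
      ↔ (∀ i, (Finset.univ.filter (fun t : G => x t = i)).card ≤ 1)) := by
  set E := univ.image fun (μ : H →* ℂˣ) i => (μ (ν i) : ℂ)
  have hcusp : Φ.filter (fun φ => ∀ μ : H →* ℂˣ, φ ≠ fun i => (μ (ν i) : ℂ)) = Φ \ E := by
    ext φ
    simp [E, eq_comm]
  have hsum := Finset.sum_sdiff (f := fun φ : Fin n → ℂ => ‖∑ t, φ (x t)‖ ^ 2 /
    ∑ i, (w i)⁻¹ * ‖φ i‖ ^ 2) (image_subset_iff.2 fun μ _ => hEis μ : E ⊆ Φ)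
  rw [sum_norm_sum_comp_sq_div_eq hw hΦorth hΦspan,
    sum_eisenstein_norm_sum_comp_sq_div w x θ ν hν hinj] at hsum
  simp only [MonoidHom.one_apply, Units.val_one, inv_one, mul_one, hcusp, mul_div_assoc]
  have hfiber : ∀ i ∈ univ, #{t | x t = i} ≤ Fintype.card G := fun i _ => card_filter_le _ _
  have hw' : ∀ i ∈ univ, 0 ≤ w i := fun i _ => (hw i).le
  refine ⟨by linarith [sum_mul_le_sum_mul_sq univ hw' fun i => #{t | x t = i}],
    by linarith [sum_mul_sq_le_mul_sum_mul univ hw' hfiber], ?_⟩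
  have hiff := sum_mul_eq_sum_mul_sq_iff univ (fun i _ => hw i) fun i => #{t | x t = i}
  simp only [mem_univ, forall_const] at hiff
  rw [← hiff]
  constructor <;> intro <;> linarith

open scoped Classical in
theorem cuspidal_period_average_bounds
    (n : ℕ) (hn : 1 ≤ n) (w : Fin n → ℝ) (hw : ∀ i, 0 < w i)
    (G : Type*) [CommGroup G] [Fintype G] [Fintype (G →* ℂˣ)]
    (H : Type*) [CommGroup H] [Fintype H] [Fintype (H →* ℂˣ)]
    (x : G → Fin n) (θ : G →* H) (ν : Fin n → H)
    (hν : ∀ t : G, ν (x t) = θ t)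
    (Φ : Finset (Fin n → ℂ))
    (hΦ0 : ∀ φ ∈ Φ, φ ≠ 0)
    (hΦorth : ∀ φ ∈ Φ, ∀ ψ ∈ Φ, φ ≠ ψ →
      ∑ i, ((w i : ℂ))⁻¹ * φ i * (starRingEnd ℂ) (ψ i) = 0)
    (hΦspan : Submodule.span ℂ (Φ : Set (Fin n → ℂ)) = ⊤)
    (hEis : ∀ μ : H →* ℂˣ, (fun i => ((μ (ν i) : ℂ))) ∈ Φ)
    (hinj : Function.Injective (fun (μ : H →* ℂˣ) => (fun i => ((μ (ν i) : ℂ))))) :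
    (∑ i, w i * ((Finset.univ.filter (fun t : G => x t = i)).card : ℝ)
        - ((Finset.univ.filter (fun μ : H →* ℂˣ => μ.comp θ = (1 : G →* ℂˣ))).card : ℝ)
            * (Fintype.card G : ℝ) ^ 2 / (∑ i, (w i)⁻¹)
      ≤ ∑ φ ∈ Φ.filter (fun φ => ∀ μ : H →* ℂˣ, φ ≠ fun i => ((μ (ν i) : ℂ))),
          ‖∑ t : G, φ (x t) * (((1 : G →* ℂˣ) t : ℂ))⁻¹‖ ^ 2 /
            (∑ i, (w i)⁻¹ * ‖φ i‖ ^ 2)) ∧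
    (∑ φ ∈ Φ.filter (fun φ => ∀ μ : H →* ℂˣ, φ ≠ fun i => ((μ (ν i) : ℂ))),
          ‖∑ t : G, φ (x t) * (((1 : G →* ℂˣ) t : ℂ))⁻¹‖ ^ 2 /
            (∑ i, (w i)⁻¹ * ‖φ i‖ ^ 2)
      ≤ (Fintype.card G : ℝ)
            * ∑ i, w i * ((Finset.univ.filter (fun t : G => x t = i)).card : ℝ)
        - ((Finset.univ.filter (fun μ : H →* ℂˣ => μ.comp θ = (1 : G →* ℂˣ))).card : ℝ)
            * (Fintype.card G : ℝ) ^ 2 / (∑ i, (w i)⁻¹)) ∧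
    ((∑ φ ∈ Φ.filter (fun φ => ∀ μ : H →* ℂˣ, φ ≠ fun i => ((μ (ν i) : ℂ))),
          ‖∑ t : G, φ (x t) * (((1 : G →* ℂˣ) t : ℂ))⁻¹‖ ^ 2 /
            (∑ i, (w i)⁻¹ * ‖φ i‖ ^ 2)
      = ∑ i, w i * ((Finset.univ.filter (fun t : G => x t = i)).card : ℝ)
          - ((Finset.univ.filter (fun μ : H →* ℂˣ => μ.comp θ = (1 : G →* ℂˣ))).card : ℝ)
              * (Fintype.card G : ℝ) ^ 2 / (∑ i, (w i)⁻¹))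
      ↔ (∀ i, (Finset.univ.filter (fun t : G => x t = i)).card ≤ 1)) :=
  cuspidal_period_average_bounds_general n w hw G H x θ ν hν Φ hΦorth hΦspan hEis hinj
end

section
/- Suppose w i = 1 for all i, so that ⟨·,·⟩ is the standard inner product on ℂ^n and m = n. Let Φ be an orthogonal basis of ℂ^n such that φ_μ ∈ Φ for every character μ of H and μ ↦ φ_μ is injective, and set Φ₀ = Φ \ {φ_μ : μ ∈ Ĥ}. Then ∑_{φ ∈ Φ₀} ∑_{χ ∈ Ĝ} |P_χ(φ)|² / ⟨φ, φ⟩ = |G|² · (1 − |H|/n). (This is the paper's Corollary (cor:per-avg-bal)(i), the exact double average of squared periods over the cuspidal subspace for a balanced order, in the linear-algebra form in which it is proved, with H ≅ Cl⁺(N(𝒪̂)) and n = m(𝒪) the mass.) -/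
/-!
Expanding `|P_χ(φ)|²` and summing over `χ ∈ Ĝ` with orthogonality of characters gives
`∑_χ |P_χ(φ)|² = |G| ∑_t |φ(x t)|²`. For an orthogonal basis, Parseval applied to the
coordinate vectors gives `∑_{φ ∈ Φ} |φ i|² / ⟨φ, φ⟩ = 1` for every `i`, so the double average
over all of `Φ` is `|G|²`. Each of the `|Ĥ| = |H|` vectors `φ_μ` has unimodular entries and
contributes `|G|² / n`; removing them leaves `|G|² (1 - |H| / n)`.
-/

open Finset
open scoped InnerProductSpace

section Characters

variable {G : Type*} [CommGroup G] [Fintype G]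

lemma norm_monoidHom_units_complex_apply (χ : G →* ℂˣ) (t : G) : ‖(χ t : ℂ)‖ = 1 :=
  (((Units.coeHom ℂ).comp χ).isOfFinOrder (isOfFinOrder_of_finite t)).norm_eq_one

lemma monoidHom_units_complex_inv_mul_conj (χ : G →* ℂˣ) (t s : G) :
    (χ t : ℂ)⁻¹ * starRingEnd ℂ (χ s : ℂ)⁻¹ = χ (t⁻¹ * s) := by
  rw [map_inv₀, ← Complex.inv_eq_conj (norm_monoidHom_units_complex_apply χ s), inv_inv,
    map_mul, map_inv, Units.val_mul, Units.val_inv_eq_inv_val]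

variable [Fintype (G →* ℂˣ)]

lemma card_monoidHom_units_complex : Fintype.card (G →* ℂˣ) = Fintype.card G := by
  have : NeZero (Monoid.exponent G) := ⟨Monoid.exponent_ne_zero_of_finite⟩
  simpa only [Nat.card_eq_fintype_card] using
    CommGroup.card_monoidHom_of_hasEnoughRootsOfUnity G ℂ

lemma sum_monoidHom_units_complex_apply [DecidableEq G] (g : G) :
    ∑ χ : G →* ℂˣ, (χ g : ℂ) = if g = 1 then (Fintype.card G : ℂ) else 0 := by
  classical
  have : NeZero (Monoid.exponent G) := ⟨Monoid.exponent_ne_zero_of_finite⟩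
  have hev : (Units.coeHom ℂ).comp (MonoidHom.eval g) = 1 ↔ g = 1 := by
    simpa [DFunLike.ext_iff] using CommGroup.forall_apply_eq_apply_iff G (M := ℂ) (g' := 1)
  simpa [hev, card_monoidHom_units_complex] using
    sum_hom_units ((Units.coeHom ℂ).comp (MonoidHom.eval g))

theorem sum_norm_sq_sum_mul_inv_apply (f : G → ℂ) :
    ∑ χ : G →* ℂˣ, ‖∑ t, f t * (χ t : ℂ)⁻¹‖ ^ 2 = Fintype.card G * ∑ t, ‖f t‖ ^ 2 := by
  classical
  apply Complex.ofReal_injective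
  push_cast
  calc ∑ χ : G →* ℂˣ, (‖∑ t, f t * (χ t : ℂ)⁻¹‖ : ℂ) ^ 2
      = ∑ χ : G →* ℂˣ, ∑ t, ∑ s, f t * starRingEnd ℂ (f s) * χ (t⁻¹ * s) := by
        refine sum_congr rfl fun χ _ => ?_
        rw [← Complex.mul_conj', map_sum, sum_mul_sum]
        refine sum_congr rfl fun t _ => sum_congr rfl fun s _ => ?_
        rw [← monoidHom_units_complex_inv_mul_conj, map_mul]
        ring
    _ = ∑ t, ∑ s, f t * starRingEnd ℂ (f s) * ∑ χ : G →* ℂˣ, (χ (t⁻¹ * s) : ℂ) := by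
        simp_rw [mul_sum]
        rw [sum_comm]
        exact sum_congr rfl fun t _ => sum_comm
    _ = ∑ t, f t * starRingEnd ℂ (f t) * Fintype.card G := by
        simp only [sum_monoidHom_units_complex_apply, inv_mul_eq_one, mul_ite, mul_zero,
          sum_ite_eq, mem_univ, if_true]
    _ = Fintype.card G * ∑ t, (‖f t‖ : ℂ) ^ 2 := by
        simp_rw [Complex.mul_conj', mul_sum, mul_comm]

end Characters

/-- A zero vector in `s` contributes `0 / 0 = 0`, so it need not be excluded. -/
theorem sum_norm_inner_sq_div_norm_sq_of_pairwise_orthogonal {𝕜 E : Type*} [RCLike 𝕜]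
    [NormedAddCommGroup E] [InnerProductSpace 𝕜 E] {s : Finset E}
    (horth : (s : Set E).Pairwise fun φ ψ => ⟪φ, ψ⟫_𝕜 = 0)
    (hspan : Submodule.span 𝕜 (s : Set E) = ⊤) (v : E) :
    ∑ φ ∈ s, ‖⟪φ, v⟫_𝕜‖ ^ 2 / ‖φ‖ ^ 2 = ‖v‖ ^ 2 := by
  obtain ⟨c, -, hc⟩ := Submodule.mem_span_finset.mp (hspan ▸ Submodule.mem_top (x := v))
  have hcoef : ∀ ψ ∈ s, ⟪ψ, v⟫_𝕜 = c ψ * ‖ψ‖ ^ 2 := by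
    intro ψ hψ
    rw [← hc, inner_sum, sum_eq_single_of_mem ψ hψ]
    · rw [inner_smul_right, inner_self_eq_norm_sq_to_K]
    · intro φ hφ hne
      rw [inner_smul_right, horth hψ hφ hne.symm, mul_zero]
  apply RCLike.ofReal_injective (K := 𝕜)
  calc ((∑ φ ∈ s, ‖⟪φ, v⟫_𝕜‖ ^ 2 / ‖φ‖ ^ 2 : ℝ) : 𝕜)
      = ∑ φ ∈ s, starRingEnd 𝕜 (c φ) * ⟪φ, v⟫_𝕜 := by
        push_cast
        refine sum_congr rfl fun φ hφ => ?_
        rcases eq_or_ne φ 0 with rfl | hφ0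
        · simp
        have hnorm : (‖φ‖ : 𝕜) ≠ 0 := by simpa using hφ0
        rw [← RCLike.conj_mul, hcoef φ hφ, map_mul, map_pow, RCLike.conj_ofReal]
        field_simp
    _ = ⟪∑ φ ∈ s, c φ • φ, v⟫_𝕜 := by simp_rw [sum_inner, inner_smul_left]
    _ = ⟪v, v⟫_𝕜 := by rw [hc]
    _ = ((‖v‖ ^ 2 : ℝ) : 𝕜) := by push_cast; exact inner_self_eq_norm_sq_to_K v

theorem sum_norm_sq_apply_div_eq_one_of_pairwise_orthogonal {𝕜 ι : Type*} [RCLike 𝕜]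
    [Fintype ι] [DecidableEq ι] {Φ : Finset (ι → 𝕜)}
    (horth : ∀ φ ∈ Φ, ∀ ψ ∈ Φ, φ ≠ ψ → ∑ i, φ i * starRingEnd 𝕜 (ψ i) = 0)
    (hspan : Submodule.span 𝕜 (Φ : Set (ι → 𝕜)) = ⊤) (i : ι) :
    ∑ φ ∈ Φ, ‖φ i‖ ^ 2 / ∑ k, ‖φ k‖ ^ 2 = 1 := by
  let e := (WithLp.linearEquiv 2 𝕜 (ι → 𝕜)).symm
  have horth' : ((Φ.image e : Finset _) : Set (EuclideanSpace 𝕜 ι)).Pairwise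
      fun φ ψ => ⟪φ, ψ⟫_𝕜 = 0 := by
    rw [coe_image, e.injective.injOn.pairwise_image]
    intro φ hφ ψ hψ hne
    change ⟪e φ, e ψ⟫_𝕜 = 0
    simpa [e, PiLp.inner_apply, mul_comm] using horth ψ hψ φ hφ hne.symm
  have hspan' : Submodule.span 𝕜 ((Φ.image e : Finset _) : Set (EuclideanSpace 𝕜 ι)) = ⊤ := by
    rw [coe_image, ← e.coe_coe, Submodule.span_image, hspan, Submodule.map_top,
      LinearEquiv.range]
  simpa [e, EuclideanSpace.inner_single_right, EuclideanSpace.norm_sq_eq, sum_image] using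
    sum_norm_inner_sq_div_norm_sq_of_pairwise_orthogonal horth' hspan' (EuclideanSpace.single i 1)

theorem Finset.sum_filter_forall_ne_eq_sub {α ι M : Type*} [AddCommGroup M] [Fintype ι]
    [DecidableEq α] {s : Finset α} {e : ι → α} (he : ∀ i, e i ∈ s) (hinj : e.Injective)
    [DecidablePred fun a => ∀ i, a ≠ e i] (f : α → M) :
    ∑ a ∈ s.filter (fun a => ∀ i, a ≠ e i), f a = ∑ a ∈ s, f a - ∑ i, f (e i) := by
  have himage : s.filter (fun a => ¬ ∀ i, a ≠ e i) = univ.image e := by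
    ext a
    simp only [mem_filter, mem_image, mem_univ, true_and, not_forall, not_not]
    exact ⟨fun ⟨_, i, hi⟩ => ⟨i, hi.symm⟩, fun ⟨i, hi⟩ => ⟨hi ▸ he i, i, hi.symm⟩⟩
  rw [eq_sub_iff_add_eq, ← sum_image hinj.injOn, ← himage, sum_filter_add_sum_filter_not]

open scoped Classical in
theorem balanced_double_average_of_squared_periods_general
    (n : ℕ)
    (G : Type*) [CommGroup G] [Fintype G] [Fintype (G →* ℂˣ)]
    (H : Type*) [CommGroup H] [Fintype H] [Fintype (H →* ℂˣ)]
    (x : G → Fin n) (ν : Fin n → H)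
    (Φ : Finset (Fin n → ℂ))
    (hΦorth : ∀ φ ∈ Φ, ∀ ψ ∈ Φ, φ ≠ ψ →
      ∑ i, φ i * (starRingEnd ℂ) (ψ i) = 0)
    (hΦspan : Submodule.span ℂ (Φ : Set (Fin n → ℂ)) = ⊤)
    (hEis : ∀ μ : H →* ℂˣ, (fun i => ((μ (ν i) : ℂ))) ∈ Φ)
    (hinj : Function.Injective (fun (μ : H →* ℂˣ) => (fun i => ((μ (ν i) : ℂ))))) :
    ∑ φ ∈ Φ.filter (fun φ => ∀ μ : H →* ℂˣ, φ ≠ fun i => ((μ (ν i) : ℂ))),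
        ∑ χ : G →* ℂˣ,
          ‖∑ t : G, φ (x t) * ((χ t : ℂ))⁻¹‖ ^ 2 /
            (∑ i, ‖φ i‖ ^ 2)
      = (Fintype.card G : ℝ) ^ 2 * (1 - (Fintype.card H : ℝ) / n) := by
  set F : (Fin n → ℂ) → ℝ := fun φ =>
    ∑ χ : G →* ℂˣ, ‖∑ t : G, φ (x t) * ((χ t : ℂ))⁻¹‖ ^ 2 / ∑ i, ‖φ i‖ ^ 2
  have hF (φ : Fin n → ℂ) :
      F φ = Fintype.card G * ((∑ t, ‖φ (x t)‖ ^ 2) / ∑ i, ‖φ i‖ ^ 2) := by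
    rw [← mul_div_assoc, ← sum_norm_sq_sum_mul_inv_apply fun t => φ (x t), sum_div]
  have htotal : ∑ φ ∈ Φ, F φ = Fintype.card G ^ 2 := by
    simp_rw [hF, ← mul_sum, sum_div]
    rw [sum_comm]
    simp_rw [sum_norm_sq_apply_div_eq_one_of_pairwise_orthogonal hΦorth hΦspan]
    simp [sq]
  have heis (μ : H →* ℂˣ) : F (fun i => (μ (ν i) : ℂ)) = Fintype.card G ^ 2 / n := by
    simp [hF, norm_monoidHom_units_complex_apply, sq, mul_div_assoc]
  rw [sum_filter_forall_ne_eq_sub hEis hinj F, htotal]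
  simp only [heis, sum_const, card_univ, card_monoidHom_units_complex, nsmul_eq_mul]
  ring

open scoped Classical in
theorem balanced_double_average_of_squared_periods
    (n : ℕ) (hn : 1 ≤ n)
    (G : Type*) [CommGroup G] [Fintype G] [Fintype (G →* ℂˣ)]
    (H : Type*) [CommGroup H] [Fintype H] [Fintype (H →* ℂˣ)]
    (x : G → Fin n) (θ : G →* H) (ν : Fin n → H)
    (hν : ∀ t : G, ν (x t) = θ t)
    (Φ : Finset (Fin n → ℂ))
    (hΦ0 : ∀ φ ∈ Φ, φ ≠ 0)
    (hΦorth : ∀ φ ∈ Φ, ∀ ψ ∈ Φ, φ ≠ ψ →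
      ∑ i, φ i * (starRingEnd ℂ) (ψ i) = 0)
    (hΦspan : Submodule.span ℂ (Φ : Set (Fin n → ℂ)) = ⊤)
    (hEis : ∀ μ : H →* ℂˣ, (fun i => ((μ (ν i) : ℂ))) ∈ Φ)
    (hinj : Function.Injective (fun (μ : H →* ℂˣ) => (fun i => ((μ (ν i) : ℂ))))) :
    ∑ φ ∈ Φ.filter (fun φ => ∀ μ : H →* ℂˣ, φ ≠ fun i => ((μ (ν i) : ℂ))),
        ∑ χ : G →* ℂˣ,
          ‖∑ t : G, φ (x t) * ((χ t : ℂ))⁻¹‖ ^ 2 /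
            (∑ i, ‖φ i‖ ^ 2)
      = (Fintype.card G : ℝ) ^ 2 * (1 - (Fintype.card H : ℝ) / n) :=
  balanced_double_average_of_squared_periods_general n G H x ν Φ hΦorth hΦspan hEis hinj
end

section
/- With P₁, P₂, N₁^Σ, N₂^Σ, N^Σ, ω' and c as defined, one has: ∑_{Σ ⊆ P₁ ∪ P₂} (−1)^{#Σ} · N^Σ · (∏_{p ∈ Σ ∩ P₂} (1 + p⁻¹)⁻¹) · 2^{ω'(N₂^Σ)} · c(N₁^Σ, N₂^Σ, M) equals 12 · ∏_{p ∣ N₁N₂} (1 − p⁻¹)⁻¹ · ∏_{p ∣ N₂M} (1 + p⁻¹)⁻¹ if P₁ = ∅ and N₂ is odd, and equals 0 otherwise. (This is the second inclusion–exclusion identity established in the proof of the paper's Theorem 1.3, computing the Eisenstein contribution and producing the condition δ = 1 exactly when N₁ is squarefree and N₂ is odd.) -/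
/-- `ω'(n)`: the number of odd prime divisors of `n`. -/
def omegaOdd (n : ℕ) : ℕ := (n.primeFactors.filter (fun p => p ≠ 2)).card

/-- `c(A, B, C) = (12/(ABC)) ∏_{p ∣ AB} (1 − p⁻¹)⁻¹ ∏_{p ∣ BC} (1 + p⁻¹)⁻¹`. -/
def massConst (A B C : ℕ) : ℚ :=
  (12 / ((A : ℚ) * (B : ℚ) * (C : ℚ)))
    * (∏ p ∈ (A * B).primeFactors, (1 - (p : ℚ)⁻¹)⁻¹)
    * (∏ p ∈ (B * C).primeFactors, (1 + (p : ℚ)⁻¹)⁻¹)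

lemma factorization_prod_sq {s : Finset ℕ} (hs : ∀ p ∈ s, p.Prime) (q : ℕ) :
    (∏ p ∈ s, p ^ 2).factorization q = if q ∈ s then 2 else 0 := by
  rw [Nat.factorization_prod (fun p hp => pow_ne_zero 2 (hs p hp).pos.ne')]
  rw [Finset.sum_apply']
  rw [Finset.sum_congr rfl (fun p hp => by
    rw [(hs p hp).factorization_pow, Finsupp.single_apply])]
  exact Finset.sum_ite_eq' s q (fun _ => 2)

lemma prod_sq_dvd {n : ℕ} (hn : n ≠ 0) {s : Finset ℕ} (hs : ∀ p ∈ s, p.Prime)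
    (h : ∀ p ∈ s, 2 ≤ n.factorization p) : (∏ p ∈ s, p ^ 2) ∣ n := by
  have hne : (∏ p ∈ s, p ^ 2) ≠ 0 :=
    Finset.prod_ne_zero_iff.mpr fun p hp => pow_ne_zero 2 (hs p hp).pos.ne'
  rw [← Nat.factorization_le_iff_dvd hne hn, Finsupp.le_def]
  intro q
  rw [factorization_prod_sq hs q]
  split
  · exact h q ‹_›
  · exact Nat.zero_le _
set_option maxHeartbeats 1000000 in
/-- The second inclusion–exclusion identity from the proof of the
paper's Theorem 1.3: with `P₁ = {p prime : ord_p(N₁) > 1}`, `P₂ = {p prime : p ∣ N₂}`,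
`N₂^Σ = ∏_{p ∈ P₂∖Σ} p²`, `N₁^Σ = N₁ ∏_{p ∈ Σ∩P₁} p⁻² ∏_{p ∈ Σ∩P₂} p`, and
`N^Σ = N ∏_{p ∈ Σ∩P₁} p⁻² ∏_{p ∈ Σ∩P₂} p⁻¹`,
`∑_{Σ ⊆ P₁∪P₂} (−1)^{#Σ} N^Σ (∏_{p ∈ Σ∩P₂}(1+p⁻¹)⁻¹) 2^{ω'(N₂^Σ)} c(N₁^Σ, N₂^Σ, M)`
equals `12 ∏_{p ∣ N₁N₂} (1−p⁻¹)⁻¹ ∏_{p ∣ N₂M} (1+p⁻¹)⁻¹` if `P₁ = ∅` and `N₂` is odd,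
and equals `0` otherwise. -/
theorem inclusion_exclusion_eisenstein_identity
    (N₁ N₂ M : ℕ) (h₁ : 0 < N₁) (h₂ : 0 < N₂) (hM : 0 < M)
    (h₁₂ : Nat.Coprime N₁ N₂) (h₁M : Nat.Coprime N₁ M) (h₂M : Nat.Coprime N₂ M)
    (hodd : ∀ p : ℕ, p.Prime → p ∣ N₁ → Odd (N₁.factorization p))
    (hsq : ∃ s : ℕ, Squarefree s ∧ N₂ = s ^ 2) :
    ∑ S ∈ ((N₁.primeFactors.filter (fun p => 1 < N₁.factorization p))
            ∪ N₂.primeFactors).powerset,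
      (-1 : ℚ) ^ S.card
        * (((N₁ * N₂ * M : ℕ) : ℚ)
            * (∏ p ∈ S ∩ N₁.primeFactors.filter (fun p => 1 < N₁.factorization p),
                ((p : ℚ)⁻¹) ^ 2)
            * ∏ p ∈ S ∩ N₂.primeFactors, (p : ℚ)⁻¹)
        * (∏ p ∈ S ∩ N₂.primeFactors, (1 + (p : ℚ)⁻¹)⁻¹)
        * (2 : ℚ) ^ omegaOdd (∏ p ∈ N₂.primeFactors \ S, p ^ 2)
        * massConst
            ((N₁ / ∏ p ∈ S ∩ N₁.primeFactors.filter (fun p => 1 < N₁.factorization p),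
                p ^ 2)
              * ∏ p ∈ S ∩ N₂.primeFactors, p)
            (∏ p ∈ N₂.primeFactors \ S, p ^ 2) M
      = if (N₁.primeFactors.filter (fun p => 1 < N₁.factorization p)) = ∅ ∧ Odd N₂ then
          12 * (∏ p ∈ (N₁ * N₂).primeFactors, (1 - (p : ℚ)⁻¹)⁻¹)
            * (∏ p ∈ (N₂ * M).primeFactors, (1 + (p : ℚ)⁻¹)⁻¹)
        else 0 := by
  classical
  have hN₁ : N₁ ≠ 0 := h₁.ne'
  have hN₂ : N₂ ≠ 0 := h₂.ne'
  have hM0 : M ≠ 0 := hM.ne'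
  set P₁ := N₁.primeFactors.filter (fun p => 1 < N₁.factorization p) with hP₁def
  set P₂ := N₂.primeFactors with hP₂def
  have hP₁prime : ∀ p ∈ P₁, p.Prime := fun p hp =>
    Nat.prime_of_mem_primeFactors (Finset.mem_filter.mp hp).1
  have hP₂prime : ∀ p ∈ P₂, p.Prime := fun p hp => Nat.prime_of_mem_primeFactors hp
  have hdisj : Disjoint P₁ P₂ :=
    (Nat.Coprime.disjoint_primeFactors h₁₂).mono_left (Finset.filter_subset _ _)
  have hdisjM : Disjoint P₂ M.primeFactors := Nat.Coprime.disjoint_primeFactors h₂M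
  obtain ⟨s, hsf, hseq⟩ := hsq
  have hP₂s : P₂ = s.primeFactors := by
    rw [hP₂def, hseq, Nat.primeFactors_pow _ two_ne_zero]
  have hN₂eq : N₂ = ∏ p ∈ P₂, p ^ 2 := by
    rw [hP₂s, Finset.prod_pow, Nat.prod_primeFactors_of_squarefree hsf, ← hseq]
  set g : ℕ → ℚ := fun p => if p ∈ P₂ ∧ p ≠ 2 then 2 else 1 with hgdef
  set K : ℚ := 12 * (∏ p ∈ (N₁ * N₂).primeFactors, (1 - (p : ℚ)⁻¹)⁻¹)
      * (∏ p ∈ (N₂ * M).primeFactors, (1 + (p : ℚ)⁻¹)⁻¹) with hKdef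
  have key : ∀ S ∈ (P₁ ∪ P₂).powerset,
      (-1 : ℚ) ^ S.card
        * (((N₁ * N₂ * M : ℕ) : ℚ)
            * (∏ p ∈ S ∩ P₁, ((p : ℚ)⁻¹) ^ 2)
            * ∏ p ∈ S ∩ P₂, (p : ℚ)⁻¹)
        * (∏ p ∈ S ∩ P₂, (1 + (p : ℚ)⁻¹)⁻¹)
        * (2 : ℚ) ^ omegaOdd (∏ p ∈ P₂ \ S, p ^ 2)
        * massConst ((N₁ / ∏ p ∈ S ∩ P₁, p ^ 2) * ∏ p ∈ S ∩ P₂, p)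
            (∏ p ∈ P₂ \ S, p ^ 2) M
      = ((∏ _p ∈ S, (-1 : ℚ)) * ∏ p ∈ (P₁ ∪ P₂) \ S, g p) * K := by
    intro S hS
    rw [Finset.mem_powerset] at hS
    have hs1p : ∀ p ∈ S ∩ P₁, p.Prime := fun p hp => hP₁prime p (Finset.mem_inter.mp hp).2
    have hs2p : ∀ p ∈ S ∩ P₂, p.Prime := fun p hp => hP₂prime p (Finset.mem_inter.mp hp).2
    have hTp : ∀ p ∈ P₂ \ S, p.Prime := fun p hp => hP₂prime p (Finset.mem_sdiff.mp hp).1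
    have hd1 : (∏ p ∈ S ∩ P₁, p ^ 2) ∣ N₁ :=
      prod_sq_dvd hN₁ hs1p
        (fun p hp => (Finset.mem_filter.mp (Finset.mem_inter.mp hp).2).2)
    have hd1ne : (∏ p ∈ S ∩ P₁, p ^ 2) ≠ 0 :=
      Finset.prod_ne_zero_iff.mpr fun p hp => pow_ne_zero 2 (hs1p p hp).pos.ne'
    have hene : (∏ p ∈ S ∩ P₂, p) ≠ 0 :=
      Finset.prod_ne_zero_iff.mpr fun p hp => (hs2p p hp).pos.ne'
    have hbne : (∏ p ∈ P₂ \ S, p ^ 2) ≠ 0 :=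
      Finset.prod_ne_zero_iff.mpr fun p hp => pow_ne_zero 2 (hTp p hp).pos.ne'
    have hAne : (N₁ / ∏ p ∈ S ∩ P₁, p ^ 2) ≠ 0 :=
      (Nat.div_pos (Nat.le_of_dvd h₁ hd1) (Nat.pos_of_ne_zero hd1ne)).ne'
    have hpfdiv : (N₁ / ∏ p ∈ S ∩ P₁, p ^ 2).primeFactors = N₁.primeFactors := by
      ext q
      rw [← Nat.support_factorization, ← Nat.support_factorization,
        Finsupp.mem_support_iff, Finsupp.mem_support_iff,
        Nat.factorization_div hd1, Finsupp.tsub_apply, factorization_prod_sq hs1p q]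
      by_cases hq : q ∈ S ∩ P₁
      · have hqP₁ := (Finset.mem_inter.mp hq).2
        have h1lt : 1 < N₁.factorization q := (Finset.mem_filter.mp hqP₁).2
        have hqpf : q ∈ N₁.primeFactors := (Finset.mem_filter.mp hqP₁).1
        obtain ⟨k, hk⟩ := hodd q (Nat.prime_of_mem_primeFactors hqpf)
          (Nat.dvd_of_mem_primeFactors hqpf)
        simp only [hq, if_true]
        omega
      · simp [hq]
    have hpfe : (∏ p ∈ S ∩ P₂, p).primeFactors = S ∩ P₂ := Nat.primeFactors_prod hs2p
    have hpfb : (∏ p ∈ P₂ \ S, p ^ 2).primeFactors = P₂ \ S := by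
      rw [Finset.prod_pow, Nat.primeFactors_pow _ two_ne_zero, Nat.primeFactors_prod hTp]
    have hs2T : (S ∩ P₂) ∪ (P₂ \ S) = P₂ := by
      ext p
      simp only [Finset.mem_union, Finset.mem_inter, Finset.mem_sdiff]
      tauto
    have hds2T : Disjoint (S ∩ P₂) (P₂ \ S) :=
      Finset.disjoint_left.mpr fun p hp hq =>
        (Finset.mem_sdiff.mp hq).2 (Finset.mem_inter.mp hp).1
    have hpfAB : (((N₁ / ∏ p ∈ S ∩ P₁, p ^ 2) * ∏ p ∈ S ∩ P₂, p)
          * ∏ p ∈ P₂ \ S, p ^ 2).primeFactors = (N₁ * N₂).primeFactors := by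
      rw [Nat.primeFactors_mul (Nat.mul_ne_zero hAne hene) hbne,
        Nat.primeFactors_mul hAne hene, hpfdiv, hpfe, hpfb,
        Nat.primeFactors_mul hN₁ hN₂, Finset.union_assoc, hs2T, ← hP₂def]
    have hpfBM : ((∏ p ∈ P₂ \ S, p ^ 2) * M).primeFactors
        = (P₂ \ S) ∪ M.primeFactors := by
      rw [Nat.primeFactors_mul hbne hM0, hpfb]
    have hdisj2 : Disjoint (S ∩ P₂) ((P₂ \ S) ∪ M.primeFactors) := by
      rw [Finset.disjoint_union_right]
      exact ⟨hds2T, hdisjM.mono_left Finset.inter_subset_right⟩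
    have hmerge : (∏ p ∈ S ∩ P₂, (1 + (p : ℚ)⁻¹)⁻¹)
          * ∏ p ∈ (P₂ \ S) ∪ M.primeFactors, (1 + (p : ℚ)⁻¹)⁻¹
        = ∏ p ∈ (N₂ * M).primeFactors, (1 + (p : ℚ)⁻¹)⁻¹ := by
      rw [← Finset.prod_union hdisj2, Nat.primeFactors_mul hN₂ hM0, ← hP₂def,
        ← Finset.union_assoc, hs2T]
    have hbig : ((N₁ / ∏ p ∈ S ∩ P₁, p ^ 2) * ∏ p ∈ S ∩ P₂, p)
          * (∏ p ∈ P₂ \ S, p ^ 2) * M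
          * ((∏ p ∈ S ∩ P₁, p ^ 2) * ∏ p ∈ S ∩ P₂, p) = N₁ * N₂ * M := by
      have h1 : N₁ / (∏ p ∈ S ∩ P₁, p ^ 2) * (∏ p ∈ S ∩ P₁, p ^ 2) = N₁ :=
        Nat.div_mul_cancel hd1
      have h2 : ((∏ p ∈ S ∩ P₂, p) * ∏ p ∈ S ∩ P₂, p) * (∏ p ∈ P₂ \ S, p ^ 2) = N₂ := by
        rw [← Finset.prod_mul_distrib,
          Finset.prod_congr rfl (fun p _ => (sq p).symm : ∀ p ∈ S ∩ P₂, p * p = p ^ 2),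
          ← Finset.prod_union hds2T, hs2T, ← hN₂eq]
      calc ((N₁ / ∏ p ∈ S ∩ P₁, p ^ 2) * ∏ p ∈ S ∩ P₂, p)
            * (∏ p ∈ P₂ \ S, p ^ 2) * M
            * ((∏ p ∈ S ∩ P₁, p ^ 2) * ∏ p ∈ S ∩ P₂, p)
          = (N₁ / (∏ p ∈ S ∩ P₁, p ^ 2) * (∏ p ∈ S ∩ P₁, p ^ 2))
            * (((∏ p ∈ S ∩ P₂, p) * ∏ p ∈ S ∩ P₂, p) * (∏ p ∈ P₂ \ S, p ^ 2)) * M := by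
            ring
        _ = N₁ * N₂ * M := by rw [h1, h2]
    have hQA : (((N₁ / ∏ p ∈ S ∩ P₁, p ^ 2) : ℕ) : ℚ) ≠ 0 := Nat.cast_ne_zero.mpr hAne
    have hQd : (((∏ p ∈ S ∩ P₁, p ^ 2 : ℕ)) : ℚ) ≠ 0 := Nat.cast_ne_zero.mpr hd1ne
    have hQe : (((∏ p ∈ S ∩ P₂, p : ℕ)) : ℚ) ≠ 0 := Nat.cast_ne_zero.mpr hene
    have hQb : (((∏ p ∈ P₂ \ S, p ^ 2 : ℕ)) : ℚ) ≠ 0 := Nat.cast_ne_zero.mpr hbne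
    have hQM : ((M : ℕ) : ℚ) ≠ 0 := Nat.cast_ne_zero.mpr hM0
    have hQbig : ((((N₁ / ∏ p ∈ S ∩ P₁, p ^ 2) * ∏ p ∈ S ∩ P₂, p : ℕ)) : ℚ)
          * ((∏ p ∈ P₂ \ S, p ^ 2 : ℕ) : ℚ) * (M : ℚ)
          * (((∏ p ∈ S ∩ P₁, p ^ 2 : ℕ) : ℚ) * ((∏ p ∈ S ∩ P₂, p : ℕ) : ℚ))
        = ((N₁ * N₂ * M : ℕ) : ℚ) := by exact_mod_cast congrArg (Nat.cast : ℕ → ℚ) hbig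
    have hscal : ((N₁ * N₂ * M : ℕ) : ℚ)
          * ((∏ p ∈ S ∩ P₁, p ^ 2 : ℕ) : ℚ)⁻¹ * ((∏ p ∈ S ∩ P₂, p : ℕ) : ℚ)⁻¹
          * (12 / ((((N₁ / ∏ p ∈ S ∩ P₁, p ^ 2) * ∏ p ∈ S ∩ P₂, p : ℕ) : ℚ)
              * ((∏ p ∈ P₂ \ S, p ^ 2 : ℕ) : ℚ) * (M : ℚ)))
        = 12 := by
      rw [← hQbig]
      have hQN : ((N₁ : ℕ) : ℚ) ≠ 0 := Nat.cast_ne_zero.mpr hN₁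
      have hQd' : (∏ p ∈ S ∩ P₁, (p : ℚ) ^ 2) ≠ 0 :=
        Finset.prod_ne_zero_iff.mpr fun p hp =>
          pow_ne_zero 2 (Nat.cast_ne_zero.mpr (hs1p p hp).pos.ne')
      have hQe' : (∏ p ∈ S ∩ P₂, (p : ℚ)) ≠ 0 :=
        Finset.prod_ne_zero_iff.mpr fun p hp => Nat.cast_ne_zero.mpr (hs2p p hp).pos.ne'
      have hQb' : (∏ p ∈ P₂ \ S, (p : ℚ) ^ 2) ≠ 0 :=
        Finset.prod_ne_zero_iff.mpr fun p hp =>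
          pow_ne_zero 2 (Nat.cast_ne_zero.mpr (hTp p hp).pos.ne')
      field_simp
    have hinv1 : (∏ p ∈ S ∩ P₁, ((p : ℚ)⁻¹) ^ 2)
        = ((∏ p ∈ S ∩ P₁, p ^ 2 : ℕ) : ℚ)⁻¹ := by
      push_cast
      rw [← Finset.prod_inv_distrib]
      exact Finset.prod_congr rfl fun p _ => by rw [inv_pow]
    have hinv2 : (∏ p ∈ S ∩ P₂, ((p : ℚ))⁻¹)
        = ((∏ p ∈ S ∩ P₂, p : ℕ) : ℚ)⁻¹ := by
      push_cast
      rw [← Finset.prod_inv_distrib]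
    have homega : omegaOdd (∏ p ∈ P₂ \ S, p ^ 2)
        = ((P₂ \ S).filter (fun p => p ≠ 2)).card := by
      rw [omegaOdd, hpfb]
    have hgprod : (∏ p ∈ (P₁ ∪ P₂) \ S, g p)
        = (2 : ℚ) ^ ((P₂ \ S).filter (fun p => p ≠ 2)).card := by
      have hfeq : Finset.filter (fun p => p ∈ P₂ ∧ p ≠ 2) ((P₁ ∪ P₂) \ S)
          = (P₂ \ S).filter (fun p => p ≠ 2) := by
        ext p
        simp only [Finset.mem_filter, Finset.mem_sdiff, Finset.mem_union]
        tauto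
      simp only [hgdef]
      rw [Finset.prod_ite (fun _ => (2:ℚ)) (fun _ => (1:ℚ)), hfeq, Finset.prod_const,
        Finset.prod_const_one, mul_one]
    rw [homega, hinv1, hinv2, hgprod, Finset.prod_const]
    simp only [massConst]
    rw [hpfAB, hpfBM]
    conv_rhs => rw [hKdef, ← hscal, ← hmerge]
    push_cast
    ring
  refine (Finset.sum_congr rfl key).trans ?_
  rw [← Finset.sum_mul, ← Finset.prod_add (fun _ => (-1 : ℚ)) g (P₁ ∪ P₂)]
  have hodd2 : Odd N₂ ↔ 2 ∉ P₂ := by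
    rw [hP₂def, Nat.mem_primeFactors]
    constructor
    · intro h hmem
      rcases hmem.2.1 with ⟨k, hk⟩
      rw [Nat.odd_iff] at h
      omega
    · intro h
      rw [Nat.odd_iff]
      rcases Nat.even_or_odd N₂ with he | ho
      · exact absurd ⟨Nat.prime_two, he.two_dvd, hN₂⟩ h
      · exact Nat.odd_iff.mp ho
  by_cases hc : P₁ = ∅ ∧ Odd N₂
  · have h2P₂ : 2 ∉ P₂ := hodd2.mp hc.2
    rw [if_pos hc]
    have hone : ∏ p ∈ P₁ ∪ P₂, ((fun _ => (-1 : ℚ)) p + g p) = 1 := by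
      apply Finset.prod_eq_one
      intro p hp
      rw [hc.1, Finset.empty_union] at hp
      have hp2 : p ≠ 2 := fun h => h2P₂ (h ▸ hp)
      simp only [hgdef]
      rw [if_pos ⟨hp, hp2⟩]
      norm_num
    rw [hone, one_mul]
  · rw [if_neg hc]
    have hzero : ∏ p ∈ P₁ ∪ P₂, ((fun _ => (-1 : ℚ)) p + g p) = 0 := by
      rcases Classical.em (P₁ = ∅) with h1 | h1
      · have h2mem : 2 ∈ P₂ := by
          by_contra h2
          exact hc ⟨h1, hodd2.mpr h2⟩
        apply Finset.prod_eq_zero (Finset.mem_union_right P₁ h2mem)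
        simp only [hgdef]
        rw [if_neg (by simp)]
        norm_num
      · obtain ⟨q, hq⟩ := Finset.nonempty_iff_ne_empty.mpr h1
        apply Finset.prod_eq_zero (Finset.mem_union_left P₂ hq)
        have hqP₂ : q ∉ P₂ := Finset.disjoint_left.mp hdisj hq
        simp only [hgdef]
        rw [if_neg (by tauto)]
        norm_num
    rw [hzero, zero_mul]
end
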